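/- Let α₀, β₀ > 0 with α₀/(α₀+β₀) < 1/2, and n > 0. Let x_R have density P_R > 0 and conditional probability q_R ≥ 1/2, let x_U have density P_U = 0 and q_U ≥ 1/2, and let x_I have density P_I > 0 and q_I = 0. With φ(P,q) = (α₀ + n·P·q)/(α₀ + β₀ + n·P), we have φ(P_R, q_R) > φ(P_U, q_U) > φ(P_I, q_I). -/
import Mathlib


theorem eap_ranking (α₀ β₀ n : ℝ) (hα : 0 < α₀) (hβ : 0 < β₀)
    (hprior : α₀ / (α₀ + β₀) < 1 / 2) (hn : 0 < n)
    (P_R q_R P_U q_U P_I q_I : ℝ)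
    (hPR : 0 < P_R) (hqR : 1 / 2 ≤ q_R)
    (hPU : P_U = 0) (hqU : 1 / 2 ≤ q_U)
    (hPI : 0 < P_I) (hqI : q_I = 0) :
    (α₀ + n * P_R * q_R) / (α₀ + β₀ + n * P_R) >
      (α₀ + n * P_U * q_U) / (α₀ + β₀ + n * P_U) ∧
    (α₀ + n * P_U * q_U) / (α₀ + β₀ + n * P_U) >
      (α₀ + n * P_I * q_I) / (α₀ + β₀ + n * P_I) := by
  subst hPU hqI
  have hab : 0 < α₀ + β₀ := by linarith
  have hdR : 0 < α₀ + β₀ + n * P_R := by positivity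
  have hdI : 0 < α₀ + β₀ + n * P_I := by positivity
  simp only [mul_zero, zero_mul, add_zero]
  constructor
  · rw [gt_iff_lt, div_lt_div_iff₀ hab hdR]
    have hq : α₀ / (α₀ + β₀) < q_R := lt_of_lt_of_le hprior hqR
    rw [div_lt_iff₀ hab] at hq
    nlinarith [mul_pos hn hPR]
  · rw [gt_iff_lt, div_lt_div_iff₀ hdI hab]
    nlinarith [mul_pos hn hPI]
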